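/- arXiv:2106.07126 — 4 statements merged into one kernel-verified Lean document; each statement's English description precedes it below -/
import Mathlib

section
/- Let n ≥ 3, t ≥ 0 and ξ ∈ 𝕊ⁿ. The function u_{t,ξ}(x) = (cosh t + sinh t (x·ξ))^{−(n−2)/2} is a positive smooth function on 𝕊ⁿ satisfying, at every x ∈ 𝕊ⁿ, the equation −(4/(n(n−2))) Δ_{𝕊ⁿ} u_{t,ξ}(x) + u_{t,ξ}(x) = u_{t,ξ}(x)^{(n+2)/(n−2)}. -/
noncomputable section

section auxlemmas
open Real
variable {F : Type*} [NormedAddCommGroup F] [InnerProductSpace ℝ F]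
local notation "⟪" x ", " y "⟫" => @inner ℝ _ _ x y

lemma normInv_hasFDerivAt {y : F} (hy : y ≠ 0) :
    HasFDerivAt (fun z : F => ‖z‖⁻¹) ((-(‖y‖⁻¹ ^ 3)) • innerSL ℝ y) y := by
  have hne : (‖y‖ : ℝ) ^ 2 ≠ 0 := pow_ne_zero 2 (norm_ne_zero_iff.mpr hy)
  have h1 : HasFDerivAt (fun z : F => (‖z‖ ^ 2 : ℝ) ^ (-(1/2) : ℝ))
      (((-(1/2) : ℝ) * (‖y‖ ^ 2 : ℝ) ^ ((-(1/2) : ℝ) - 1)) • (2 • innerSL ℝ y)) y :=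
    ((hasStrictFDerivAt_norm_sq y).hasFDerivAt).rpow_const (Or.inl hne)
  have hfun : (fun z : F => (‖z‖ ^ 2 : ℝ) ^ (-(1/2) : ℝ)) = fun z : F => ‖z‖⁻¹ := by
    funext z
    rcases eq_or_ne z 0 with rfl | hz
    · simp [Real.zero_rpow]
    · rw [← Real.rpow_natCast ‖z‖ 2, ← Real.rpow_mul (norm_nonneg z),
        show ((2:ℕ):ℝ) * (-(1/2:ℝ)) = -((1:ℕ):ℝ) by push_cast; ring,
        Real.rpow_neg (norm_nonneg z), Real.rpow_natCast, pow_one]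
  have h2 : ((‖y‖ : ℝ) ^ 2) ^ ((-(1/2) : ℝ) - 1) = ‖y‖⁻¹ ^ 3 := by
    rw [← Real.rpow_natCast ‖y‖ 2, ← Real.rpow_mul (norm_nonneg y),
      show ((2:ℕ):ℝ) * (-(1/2:ℝ) - 1) = -((3:ℕ):ℝ) by push_cast; ring,
      Real.rpow_neg (norm_nonneg y), Real.rpow_natCast, inv_pow]
  have hder : (((-(1/2) : ℝ) * (‖y‖ ^ 2 : ℝ) ^ ((-(1/2) : ℝ) - 1)) • (2 • innerSL ℝ y))
      = (-(‖y‖⁻¹ ^ 3)) • innerSL ℝ y := by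
    ext v
    simp only [ContinuousLinearMap.smul_apply, smul_eq_mul, nsmul_eq_mul, h2,
      ContinuousLinearMap.coe_smul', Pi.smul_apply]
    ring
  rw [hfun, hder] at h1
  exact h1

lemma fderiv_main (c s p : ℝ) (ξ : F) {y : F} (hy : y ≠ 0)
    (hpos : 0 < c + s * (⟪ξ, y⟫ * ‖y‖⁻¹)) (v : F) :
    fderiv ℝ (fun z => (c + s * (⟪ξ, z⟫ * ‖z‖⁻¹)) ^ (-p)) y v
      = (-p) * s * ((c + s * (⟪ξ, y⟫ * ‖y‖⁻¹)) ^ (-p - 1) *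
        (⟪ξ, v⟫ * ‖y‖⁻¹ - ⟪ξ, y⟫ * ⟪y, v⟫ * ‖y‖⁻¹ ^ 3)) := by
  have hin : HasFDerivAt (fun z : F => ⟪ξ, z⟫) (innerSL ℝ ξ) y :=
    (innerSL ℝ ξ).hasFDerivAt
  have hmul := hin.mul (normInv_hasFDerivAt hy)
  have hG := (hmul.const_mul s).const_add c
  have hF := hG.rpow_const (p := -p) (Or.inl hpos.ne')
  rw [HasFDerivAt.fderiv (f := fun z => (c + s * (⟪ξ, z⟫ * ‖z‖⁻¹)) ^ (-p)) hF]
  simp only [ContinuousLinearMap.smul_apply, ContinuousLinearMap.add_apply,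
    ContinuousLinearMap.neg_apply, ContinuousLinearMap.coe_smul', Pi.smul_apply,
    innerSL_apply_apply, smul_eq_mul, Pi.mul_apply]
  ring

lemma dir2_main (c s p : ℝ) (ξ : F) {x : F} (hx : ‖x‖ = 1)
    (hpos : ∀ z : F, z ≠ 0 → 0 < c + s * (⟪ξ, z⟫ * ‖z‖⁻¹)) (v : F) :
    fderiv ℝ (fun y => fderiv ℝ (fun z => (c + s * (⟪ξ, z⟫ * ‖z‖⁻¹)) ^ (-p)) y v) x v
      = (-p) * s * ( (-(p+1)) * (c + s*⟪ξ,x⟫) ^ (-p-2) * s * (⟪ξ,v⟫ - ⟪ξ,x⟫*⟪x,v⟫) * ⟪ξ,v⟫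
          - (c + s*⟪ξ,x⟫) ^ (-p-1) * ⟪ξ,v⟫ * ⟪x,v⟫
          + (p+1) * (c + s*⟪ξ,x⟫) ^ (-p-2) * s * (⟪ξ,v⟫ - ⟪ξ,x⟫*⟪x,v⟫) * ⟪ξ,x⟫ * ⟪x,v⟫
          - (c + s*⟪ξ,x⟫) ^ (-p-1) * (⟪ξ,v⟫*⟪x,v⟫ + ⟪ξ,x⟫*⟪v,v⟫ - 3*⟪ξ,x⟫*⟪x,v⟫^2) ) := by
  have hx0 : x ≠ 0 := by intro h; rw [h] at hx; simp at hx
  have hopen : ∀ᶠ y in nhds x, y ≠ 0 := eventually_ne_nhds hx0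
  have hEq : (fun y => fderiv ℝ (fun z => (c + s * (⟪ξ, z⟫ * ‖z‖⁻¹)) ^ (-p)) y v)
      =ᶠ[nhds x] (fun y => (-p) * s * ((c + s * (⟪ξ, y⟫ * ‖y‖⁻¹)) ^ (-p-1) *
        (⟪ξ, v⟫ * ‖y‖⁻¹ - ⟪ξ, y⟫ * ⟪v, y⟫ * (‖y‖⁻¹ * (‖y‖⁻¹ * ‖y‖⁻¹))))) := by
    filter_upwards [hopen] with y hy
    rw [fderiv_main c s p ξ hy (hpos y hy), real_inner_comm v y]
    ring
  rw [hEq.fderiv_eq]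
  -- build HasFDerivAt for ψ
  have hin : HasFDerivAt (fun z : F => ⟪ξ, z⟫) (innerSL ℝ ξ) x := (innerSL ℝ ξ).hasFDerivAt
  have hinv : HasFDerivAt (fun z : F => ⟪v, z⟫) (innerSL ℝ v) x := (innerSL ℝ v).hasFDerivAt
  have hN := normInv_hasFDerivAt hx0
  have hG := ((hin.mul hN).const_mul s).const_add c
  have hGpos : 0 < c + s * (⟪ξ, x⟫ * ‖x‖⁻¹) := hpos x hx0
  have hA := hG.rpow_const (p := -p-1) (Or.inl hGpos.ne')
  have h1 := hN.const_mul (⟪ξ, v⟫ : ℝ)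
  have h2 := (hin.mul hinv).mul (hN.mul (hN.mul hN))
  have h3 := h1.sub h2
  have hψ := (hA.mul h3).const_mul ((-p) * s)
  rw [HasFDerivAt.fderiv (f := fun y => (-p) * s * ((c + s * (⟪ξ, y⟫ * ‖y‖⁻¹)) ^ (-p-1) *
      (⟪ξ, v⟫ * ‖y‖⁻¹ - ⟪ξ, y⟫ * ⟪v, y⟫ * (‖y‖⁻¹ * (‖y‖⁻¹ * ‖y‖⁻¹))))) hψ]
  simp only [ContinuousLinearMap.smul_apply, ContinuousLinearMap.add_apply,
    ContinuousLinearMap.sub_apply, ContinuousLinearMap.neg_apply,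
    ContinuousLinearMap.coe_smul', Pi.smul_apply, innerSL_apply_apply, smul_eq_mul,
    Pi.mul_apply, Pi.sub_apply]
  simp only [hx, inv_one, mul_one, one_pow]
  rw [show (-p-1-1 : ℝ) = -p-2 by ring, real_inner_comm v x]
  ring

end auxlemmas

section mainthm
local notation "⟪" x ", " y "⟫" => @inner ℝ _ _ x y


/-- The degree-zero homogeneous extension of a function on the unit sphere:
`F̃(y) = F(y/‖y‖)`. -/
def sphExt {n : ℕ} (F : EuclideanSpace ℝ (Fin (n+1)) → ℝ)
    (y : EuclideanSpace ℝ (Fin (n+1))) : ℝ :=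
  F (‖y‖⁻¹ • y)

/-- Second directional derivative of `F` at `x` in direction `v`. -/
def dir2 {V : Type*} [NormedAddCommGroup V] [NormedSpace ℝ V]
    (F : V → ℝ) (x v : V) : ℝ :=
  fderiv ℝ (fun y => fderiv ℝ F y v) x v

/-- The spherical Laplacian: the Euclidean Laplacian of the degree-zero homogeneous
extension, evaluated at a point of the sphere. -/
def sphLap {n : ℕ} (F : EuclideanSpace ℝ (Fin (n+1)) → ℝ)
    (x : EuclideanSpace ℝ (Fin (n+1))) : ℝ :=
  ∑ i : Fin (n+1), dir2 (sphExt F) x (EuclideanSpace.single i 1)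

/-- The spherical gradient: the Euclidean gradient of the degree-zero homogeneous
extension, evaluated at a point of the sphere. -/
def sphGrad {n : ℕ} (F : EuclideanSpace ℝ (Fin (n+1)) → ℝ)
    (x : EuclideanSpace ℝ (Fin (n+1))) : EuclideanSpace ℝ (Fin (n+1)) :=
  gradient (sphExt F) x

/-- for `n ≥ 3`, `t ≥ 0`, `ξ ∈ 𝕊ⁿ`, the function
`u_{t,ξ}(x) = (cosh t + sinh t (x·ξ))^{−(n−2)/2}` is a positive smooth function on `𝕊ⁿ`
satisfying `−(4/(n(n−2))) Δ_{𝕊ⁿ} u + u = u^{(n+2)/(n−2)}` at every point of `𝕊ⁿ`. -/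
theorem stmt3 (n : ℕ) (hn : 3 ≤ n) (t : ℝ) (ht : 0 ≤ t)
    (ξ : EuclideanSpace ℝ (Fin (n+1))) (hξ : ‖ξ‖ = 1)
    (u : EuclideanSpace ℝ (Fin (n+1)) → ℝ)
    (hu : ∀ x, u x = (Real.cosh t + Real.sinh t * (inner ℝ x ξ : ℝ)) ^ (-(((n : ℝ) - 2) / 2))) :
    ContDiffOn ℝ (⊤ : ℕ∞) (sphExt u) {y | y ≠ 0} ∧
    ∀ x : EuclideanSpace ℝ (Fin (n+1)), ‖x‖ = 1 →
      0 < u x ∧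
      -(4 / ((n : ℝ) * ((n : ℝ) - 2))) * sphLap u x + u x
        = u x ^ (((n : ℝ) + 2) / ((n : ℝ) - 2)) := by
  set c : ℝ := Real.cosh t with hc
  set s : ℝ := Real.sinh t with hsdef
  set p : ℝ := ((n : ℝ) - 2) / 2 with hpdef
  have hs : 0 ≤ s := by rw [hsdef, ← Real.sinh_zero]; exact Real.sinh_le_sinh.mpr ht
  have hcs : 0 < c - s := by rw [hc, hsdef, Real.cosh_sub_sinh]; positivity
  have hc2 : c ^ 2 - s ^ 2 = 1 := Real.cosh_sq_sub_sinh_sq t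
  have hn3 : (3 : ℝ) ≤ (n : ℝ) := by exact_mod_cast hn
  have hn2 : ((n : ℝ) - 2) ≠ 0 := by linarith
  have hn0 : ((n : ℝ)) ≠ 0 := by linarith
  -- positivity of the base everywhere
  have hpos : ∀ z : EuclideanSpace ℝ (Fin (n+1)), z ≠ 0 →
      0 < c + s * (⟪ξ, z⟫ * ‖z‖⁻¹) := by
    intro z hz
    have habs : |⟪ξ, z⟫ * ‖z‖⁻¹| ≤ 1 := by
      rw [abs_mul, abs_of_nonneg (inv_nonneg.mpr (norm_nonneg z))]
      calc |⟪ξ, z⟫| * ‖z‖⁻¹ ≤ (‖ξ‖ * ‖z‖) * ‖z‖⁻¹ := by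
              gcongr; exact abs_real_inner_le_norm ξ z
        _ = 1 := by rw [hξ, one_mul, mul_inv_cancel₀ (norm_ne_zero_iff.mpr hz)]
    have h1 : (-1 : ℝ) ≤ ⟪ξ, z⟫ * ‖z‖⁻¹ := by
      have := neg_abs_le (⟪ξ, z⟫ * ‖z‖⁻¹); linarith
    have h2 : s * (-1) ≤ s * (⟪ξ, z⟫ * ‖z‖⁻¹) := mul_le_mul_of_nonneg_left h1 hs
    linarith
  -- identification of sphExt u
  have hExt : sphExt u = fun y => (c + s * (⟪ξ, y⟫ * ‖y‖⁻¹)) ^ (-p) := by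
    funext y
    rw [sphExt, hu]
    congr 1
    rw [real_inner_smul_left, real_inner_comm]
    ring
  constructor
  · rw [hExt]
    intro y hy
    apply ContDiffAt.contDiffWithinAt
    have hy' : y ≠ 0 := hy
    have hinner : ContDiffAt ℝ (⊤ : ℕ∞) (fun z : EuclideanSpace ℝ (Fin (n+1)) => ⟪ξ, z⟫) y :=
      (innerSL ℝ ξ).contDiff.contDiffAt
    have hninv : ContDiffAt ℝ (⊤ : ℕ∞) (fun z : EuclideanSpace ℝ (Fin (n+1)) => ‖z‖⁻¹) y :=
      (contDiffAt_norm ℝ hy').inv (norm_ne_zero_iff.mpr hy')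
    have hbase : ContDiffAt ℝ (⊤ : ℕ∞)
        (fun z : EuclideanSpace ℝ (Fin (n+1)) => c + s * (⟪ξ, z⟫ * ‖z‖⁻¹)) y :=
      (contDiffAt_const.add (contDiffAt_const.mul (hinner.mul hninv)))
    exact hbase.rpow_const_of_ne (hpos y hy').ne'
  · intro x hx
    have hx0 : x ≠ 0 := by intro h; rw [h] at hx; simp at hx
    have hxi : ‖x‖⁻¹ = 1 := by rw [hx, inv_one]
    set r : ℝ := ⟪x, ξ⟫ with hrdef
    have hrξ : ⟪ξ, x⟫ = r := (real_inner_comm ξ x).symm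
    have hG : 0 < c + s * r := by
      have := hpos x hx0; rw [hrξ, hxi, mul_one] at this; exact this
    have hux : u x = (c + s * r) ^ (-p) := by rw [hu]
    refine ⟨by rw [hux]; exact Real.rpow_pos_of_pos hG _, ?_⟩
    have hterm : ∀ i : Fin (n+1), dir2 (sphExt u) x (EuclideanSpace.single i 1)
        = (p*(p+1)*s^2*((c+s*r)^(-p-2))) * (ξ i * ξ i)
          + (2*p*s*((c+s*r)^(-p-1)) - 2*p*(p+1)*s^2*r*((c+s*r)^(-p-2))) * (x i * ξ i)
          + (p*(p+1)*s^2*r^2*((c+s*r)^(-p-2)) - 3*p*s*r*((c+s*r)^(-p-1))) * (x i * x i)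
          + p*s*r*((c+s*r)^(-p-1)) := by
      intro i
      have hd : dir2 (sphExt u) x (EuclideanSpace.single i 1)
          = fderiv ℝ (fun y => fderiv ℝ (sphExt u) y (EuclideanSpace.single i 1)) x
              (EuclideanSpace.single i 1) := rfl
      rw [hd, hExt, dir2_main c s p ξ hx hpos (EuclideanSpace.single i 1), hrξ]
      simp only [EuclideanSpace.inner_single_right, conj_trivial, one_mul,
        EuclideanSpace.single_apply, eq_self_iff_true, if_true]
      ring
    have hxx : ∑ i, x i * x i = 1 := by
      have h1 : ⟪x, x⟫ = (1:ℝ) := by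
        rw [real_inner_self_eq_norm_sq, hx]; norm_num
      rw [← h1, PiLp.inner_apply]
      simp [RCLike.inner_apply, conj_trivial]
      simp only [sq]
    have hxξ : ∑ i, x i * ξ i = r := by
      rw [hrdef, PiLp.inner_apply]
      simp [RCLike.inner_apply, conj_trivial]
      exact Finset.sum_congr rfl (fun i _ => mul_comm _ _)
    have hξξ : ∑ i, ξ i * ξ i = 1 := by
      have h1 : ⟪ξ, ξ⟫ = (1:ℝ) := by
        rw [real_inner_self_eq_norm_sq, hξ]; norm_num
      rw [← h1, PiLp.inner_apply]
      simp [RCLike.inner_apply, conj_trivial]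
      simp only [sq]
    have hlap : sphLap u x = p*(p+1)*s^2*(1-r^2)*((c+s*r)^(-p-2))
        + (n:ℝ)*p*s*r*((c+s*r)^(-p-1)) := by
      have h0 : sphLap u x = ∑ i : Fin (n+1), dir2 (sphExt u) x (EuclideanSpace.single i 1) := rfl
      rw [h0, Finset.sum_congr rfl (fun i _ => hterm i)]
      rw [Finset.sum_add_distrib, Finset.sum_add_distrib, Finset.sum_add_distrib,
        ← Finset.mul_sum, ← Finset.mul_sum, ← Finset.mul_sum, Finset.sum_const,
        Finset.card_univ, Fintype.card_fin, hxx, hxξ, hξξ, nsmul_eq_mul]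
      push_cast
      ring
    have hk1 : 4/((n:ℝ)*((n:ℝ)-2)) * (p*(p+1)) = 1 := by
      rw [hpdef]; field_simp; ring
    have hk2 : 4/((n:ℝ)*((n:ℝ)-2)) * ((n:ℝ)*p) = 2 := by
      rw [hpdef]; field_simp; ring
    have e1 : (c+s*r)^(-p) = (c+s*r)^(-p-2) * (c+s*r)^(2:ℕ) := by
      rw [← Real.rpow_natCast (c+s*r) 2, ← Real.rpow_add hG]
      congr 1
      push_cast; ring
    have e2 : (c+s*r)^(-p-1) = (c+s*r)^(-p-2) * (c+s*r) := by
      rw [show (-p-1 : ℝ) = (-p-2)+1 by ring, Real.rpow_add_one hG.ne']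
    have hRHS : u x ^ (((n:ℝ)+2)/((n:ℝ)-2)) = (c+s*r)^(-p-2) := by
      rw [hux, ← Real.rpow_mul hG.le]
      congr 1
      rw [hpdef]; field_simp; ring
    rw [hRHS, hlap, hux, e1, e2]
    linear_combination (-(s^2*(1-r^2)*((c+s*r)^(-p-2)))) * hk1
      + (-(s*r*(c+s*r)*((c+s*r)^(-p-2)))) * hk2 + ((c+s*r)^(-p-2)) * hc2

end mainthm
end
end

section
/- Let n ≥ 3 and let u : 𝕊ⁿ → ℝ be a smooth positive function satisfying −Δ_{𝕊ⁿ} u + (n(n−2)/4) u = (n(n−2)/4) u^{(n+2)/(n−2)} at every point of 𝕊ⁿ. Then the positive function v = u^{−2/(n−2)} satisfies Δ_{𝕊ⁿ} v = (n/2) v^{−1} (|∇_{𝕊ⁿ} v|² + 1 − v²) at every point of 𝕊ⁿ. -/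
noncomputable section

/-- Chain rule for `fun y => f y ^ p` (rpow) at a point of an open set where `f` is
smooth and positive: first derivative and second directional derivatives. -/
lemma rpow_comp_deriv {E : Type*} [NormedAddCommGroup E] [NormedSpace ℝ E]
    (f : E → ℝ) (p : ℝ) {s : Set E} (hs : IsOpen s) {x : E} (hx : x ∈ s)
    (hf : ContDiffOn ℝ (⊤ : ℕ∞) f s) (hfpos : ∀ y ∈ s, 0 < f y) :
    fderiv ℝ (fun y => f y ^ p) x = (p * f x ^ (p-1)) • fderiv ℝ f x ∧
    (∀ w, dir2 (fun y => f y ^ p) x w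
        = (p * f x ^ (p-1)) * dir2 f x w
          + (p * (p-1) * f x ^ (p-2)) * (fderiv ℝ f x w)^2) := by
  have hfd : ∀ y ∈ s, HasFDerivAt (fun z => f z ^ p)
      ((p * f y ^ (p-1)) • fderiv ℝ f y) y := by
    intro y hy
    have hdf : HasFDerivAt f (fderiv ℝ f y) y :=
      ((hf.contDiffAt (hs.mem_nhds hy)).differentiableAt (by simp)).hasFDerivAt
    exact (Real.hasDerivAt_rpow_const (Or.inl (hfpos y hy).ne')).comp_hasFDerivAt y hdf
  have hcd : ContDiffAt ℝ (⊤ : ℕ∞) f x := hf.contDiffAt (hs.mem_nhds hx)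
  refine ⟨(hfd x hx).fderiv, ?_⟩
  intro w
  have hAd : ContDiffAt ℝ (⊤ : ℕ∞) (fun y => fderiv ℝ f y w) x :=
    (hcd.fderiv_right (by simp)).clm_apply contDiffAt_const
  have hA : HasFDerivAt (fun y => fderiv ℝ f y w)
      (fderiv ℝ (fun y => fderiv ℝ f y w) x) x :=
    (hAd.differentiableAt (by simp)).hasFDerivAt
  have hB0 : HasDerivAt (fun t : ℝ => p * t ^ (p-1)) (p * ((p-1) * f x ^ (p-2))) (f x) := by
    have h := (Real.hasDerivAt_rpow_const (x := f x) (p := p - 1)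
      (Or.inl (hfpos x hx).ne')).const_mul p
    have h12 : p - 1 - 1 = p - 2 := by ring
    rwa [h12] at h
  have hB : HasFDerivAt (fun y => p * f y ^ (p-1))
      ((p * ((p-1) * f x ^ (p-2))) • fderiv ℝ f x) x :=
    hB0.comp_hasFDerivAt x (hcd.differentiableAt (by simp)).hasFDerivAt
  have heq1 : (fun y => fderiv ℝ (fun z => f z ^ p) y w)
      =ᶠ[nhds x] fun y => (p * f y ^ (p-1)) * fderiv ℝ f y w := by
    filter_upwards [hs.mem_nhds hx] with y hy
    rw [(hfd y hy).fderiv]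
    simp
  unfold dir2
  rw [heq1.fderiv_eq, (show HasFDerivAt (fun y => p * f y ^ (p-1) * fderiv ℝ f y w) _ x from hB.mul hA).fderiv]
  simp only [ContinuousLinearMap.add_apply, ContinuousLinearMap.smul_apply, smul_eq_mul]
  ring

/-- for `n ≥ 3`, if `u > 0` is smooth on `𝕊ⁿ` and satisfies
`−Δ_{𝕊ⁿ} u + (n(n−2)/4) u = (n(n−2)/4) u^{(n+2)/(n−2)}`, then `v = u^{−2/(n−2)}` satisfies
`Δ_{𝕊ⁿ} v = (n/2) v⁻¹ (|∇_{𝕊ⁿ} v|² + 1 − v²)` at every point of `𝕊ⁿ`. -/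
theorem stmt9 (n : ℕ) (hn : 3 ≤ n)
    (u : EuclideanSpace ℝ (Fin (n+1)) → ℝ)
    (hsmooth : ContDiffOn ℝ (⊤ : ℕ∞) (sphExt u) {y | y ≠ 0})
    (hpos : ∀ x : EuclideanSpace ℝ (Fin (n+1)), ‖x‖ = 1 → 0 < u x)
    (heq : ∀ x : EuclideanSpace ℝ (Fin (n+1)), ‖x‖ = 1 →
      -sphLap u x + ((n : ℝ) * ((n : ℝ) - 2) / 4) * u x
        = ((n : ℝ) * ((n : ℝ) - 2) / 4) * u x ^ (((n : ℝ) + 2) / ((n : ℝ) - 2)))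
    (v : EuclideanSpace ℝ (Fin (n+1)) → ℝ)
    (hv : ∀ x, v x = u x ^ (-(2 / ((n : ℝ) - 2)))) :
    ∀ x : EuclideanSpace ℝ (Fin (n+1)), ‖x‖ = 1 →
      0 < v x ∧
      sphLap v x = ((n : ℝ) / 2) * (v x)⁻¹ * (‖sphGrad v x‖ ^ 2 + 1 - (v x) ^ 2) := by
  intro x hx
  have hn3 : (3:ℝ) ≤ (n:ℝ) := by exact_mod_cast hn
  have hne2 : (n:ℝ) - 2 ≠ 0 := by nlinarith
  set p : ℝ := -(2 / ((n:ℝ) - 2)) with hp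
  set q : ℝ := ((n:ℝ) + 2) / ((n:ℝ) - 2) with hq
  set c : ℝ := (n:ℝ) * ((n:ℝ) - 2) / 4 with hc
  have hx0 : x ≠ 0 := by
    intro h; rw [h] at hx; simp at hx
  have hS : IsOpen {y : EuclideanSpace ℝ (Fin (n+1)) | y ≠ 0} := isOpen_ne
  have hxS : x ∈ {y : EuclideanSpace ℝ (Fin (n+1)) | y ≠ 0} := hx0
  have hposS : ∀ y ∈ {y : EuclideanSpace ℝ (Fin (n+1)) | y ≠ 0}, 0 < sphExt u y := by
    intro y hy
    have hyn : ‖(‖y‖⁻¹ • y : EuclideanSpace ℝ (Fin (n+1)))‖ = 1 := by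
      rw [norm_smul, norm_inv, norm_norm, inv_mul_cancel₀ (norm_ne_zero_iff.2 hy)]
    exact hpos _ hyn
  have hux : sphExt u x = u x := by
    unfold sphExt; rw [hx]; simp
  have hvext : sphExt v = fun y => sphExt u y ^ p := by
    funext y; unfold sphExt; rw [hv]
  set t : ℝ := u x with htdef
  have ht : 0 < t := hpos x hx
  obtain ⟨hfder, hdir⟩ := rpow_comp_deriv (sphExt u) p hS hxS hsmooth hposS
  rw [hux] at hfder hdir
  -- gradient of v
  have hgradv : sphGrad v x = (p * t ^ (p-1)) • sphGrad u x := by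
    unfold sphGrad gradient
    rw [hvext, hfder, map_smul]
  -- sum of squares of directional derivatives equals squared norm of gradient
  have hg : ∀ i, fderiv ℝ (sphExt u) x (EuclideanSpace.single i 1) = sphGrad u x i := by
    intro i
    have h1 : fderiv ℝ (sphExt u) x (EuclideanSpace.single i 1)
        = inner ℝ (sphGrad u x) (EuclideanSpace.single i (1:ℝ)) := by
      rw [← InnerProductSpace.toDual_symm_apply]
      rfl
    rw [h1, EuclideanSpace.inner_single_right]
    simp
  have hsum : ∑ i, (fderiv ℝ (sphExt u) x (EuclideanSpace.single i 1))^2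
      = ‖sphGrad u x‖^2 := by
    rw [← real_inner_self_eq_norm_sq]
    simp_rw [hg]
    rw [PiLp.inner_apply]
    simp [pow_two]
  -- Laplacian of v
  have hLap : sphLap v x = (p * t ^ (p-1)) * sphLap u x
      + (p * (p-1) * t ^ (p-2)) * ‖sphGrad u x‖^2 := by
    unfold sphLap
    rw [hvext]
    simp_rw [hdir]
    rw [Finset.sum_add_distrib, ← Finset.mul_sum, ← Finset.mul_sum, hsum]
  -- positivity of v
  have hvx : v x = t ^ p := hv x
  have hvpos : 0 < v x := by rw [hvx]; exact Real.rpow_pos_of_pos ht p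
  refine ⟨hvpos, ?_⟩
  -- equation for u
  have hL : sphLap u x = c * t - c * t ^ q := by
    have := heq x hx
    linarith
  -- rpow arithmetic
  have h1 : t ^ (p-1) * t = t ^ p := by
    rw [← Real.rpow_add_one ht.ne']; congr 1; ring
  have h2 : t ^ (p-1) * t ^ q = t ^ (-p) := by
    rw [← Real.rpow_add ht]; congr 1
    rw [hp, hq]; field_simp; ring
  have h3 : (t ^ p)⁻¹ = t ^ (-p) := (Real.rpow_neg ht.le p).symm
  have h5 : t ^ (-p) * (t ^ p * t ^ p) = t ^ p := by
    rw [← Real.rpow_add ht, ← Real.rpow_add ht]; congr 1; ring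
  have h6 : t ^ (-p) * (t ^ (p-1) * t ^ (p-1)) = t ^ (p-2) := by
    rw [← Real.rpow_add ht, ← Real.rpow_add ht]; congr 1; ring
  have hc1 : p * c = -((n:ℝ)/2) := by
    rw [hp, hc]; field_simp; ring
  have hc2 : p * (p-1) = ((n:ℝ)/2) * p^2 := by
    rw [hp]; field_simp; ring
  rw [hLap, hgradv, norm_smul, hvx, hL, h3, mul_pow, Real.norm_eq_abs, sq_abs]
  linear_combination (p*c) * h1 - (p*c) * h2 + (t^p) * hc1 - (t^(-p)) * hc1
    + (‖sphGrad u x‖^2 * t^(p-2)) * hc2 - ((n:ℝ)/2 * p^2 * ‖sphGrad u x‖^2) * h6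
    + ((n:ℝ)/2) * h5
end
end

section
/- Let m ≥ 1, t ∈ ℝ, ξ ∈ 𝕊^{2m+1}. For every z ∈ 𝕊^{2m+1} and every w ∈ ℂ^{m+1} with Re(Σ_j w_j conj(z_j)) = 0 (i.e. w tangent to the sphere at z), the derivative W = DΦ_{t,ξ}(z)[w] of Φ_{t,ξ} (extended by the same formula to a neighborhood of 𝕊^{2m+1}) satisfies Im(Σ_j conj(Φ_{t,ξ}(z)_j) · W_j) = |cosh t + sinh t (z·ξ̄)|^{−2} · Im(Σ_j conj(z_j) · w_j). In other words, Φ_{t,ξ} pulls back the canonical contact form θ_c of 𝕊^{2m+1} to |cosh t + sinh t (z·ξ̄)|^{−2} θ_c, i.e. Φ_{t,ξ} is a pseudoconformal diffeomorphism. -/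
noncomputable section

/-- The hermitian pairing `z·ξ̄ = Σ_j z_j conj(ξ_j)` on `ℂ^{m+1}`
(note Mathlib's `inner` is conjugate-linear in the first slot). -/
def hprod {m : ℕ} (z ξ : EuclideanSpace ℂ (Fin (m+1))) : ℂ := inner ℂ ξ z

/-- The degree-zero homogeneous extension of a function on the unit sphere
`𝕊^{2m+1} ⊂ ℂ^{m+1}`: `F̃(y) = F(y/‖y‖)`. -/
def sphExtC {m : ℕ} (F : EuclideanSpace ℂ (Fin (m+1)) → ℝ)
    (y : EuclideanSpace ℂ (Fin (m+1))) : ℝ :=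
  F (‖y‖⁻¹ • y)

/-- The Euclidean Laplacian on `ℂ^{m+1} ≅ ℝ^{2m+2}`, computed in the real orthonormal
basis `{e_j, i·e_j}`. -/
def lapC {m : ℕ} (F : EuclideanSpace ℂ (Fin (m+1)) → ℝ)
    (z : EuclideanSpace ℂ (Fin (m+1))) : ℝ :=
  ∑ j : Fin (m+1),
    (dir2 F z (EuclideanSpace.single j 1) + dir2 F z (EuclideanSpace.single j Complex.I))

/-- The Reeb derivative `TF(z) = d/ds|_{s=0} F(e^{is/2} z)` for the canonical
pseudohermitian structure on `𝕊^{2m+1}`. -/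
def reeb {m : ℕ} (F : EuclideanSpace ℂ (Fin (m+1)) → ℝ)
    (z : EuclideanSpace ℂ (Fin (m+1))) : ℝ :=
  deriv (fun s : ℝ => F (Complex.exp (Complex.I * s / 2) • z)) 0

/-- The CR sub-Laplacian of `(𝕊^{2m+1}, θ_c)`:
`Δ_b F(z) = (1/4) Δ_{ℝ^{2m+2}} F̃(z) − T(TF)(z)`. -/
def subLapC {m : ℕ} (F : EuclideanSpace ℂ (Fin (m+1)) → ℝ)
    (z : EuclideanSpace ℂ (Fin (m+1))) : ℝ :=
  (1 / 4) * lapC (sphExtC F) z - reeb (reeb (sphExtC F)) z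

/-- Orthogonal projection onto the holomorphic tangent (horizontal) space
`H_z = {w : Σ_j w_j conj(z_j) = 0}` at a point `z` of the unit sphere. -/
def projH {m : ℕ} (z w : EuclideanSpace ℂ (Fin (m+1))) : EuclideanSpace ℂ (Fin (m+1)) :=
  w - (inner ℂ z w : ℂ) • z

/-- `|∂F|²(z) = (1/8)|P_{H_z}(∇F̃(z))|²`, the squared norm of `∂_b F` with respect to the
canonical pseudohermitian structure `θ_c`. -/
def delbSq {m : ℕ} (F : EuclideanSpace ℂ (Fin (m+1)) → ℝ)
    (z : EuclideanSpace ℂ (Fin (m+1))) : ℝ :=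
  (1 / 8) * ‖projH z (gradient (sphExtC F) z)‖ ^ 2

/-- The pseudoconformal map `Φ_{t,ξ}` of the CR sphere `𝕊^{2m+1} ⊂ ℂ^{m+1}`. -/
def PhiC {m : ℕ} (t : ℝ) (ξ z : EuclideanSpace ℂ (Fin (m+1))) :
    EuclideanSpace ℂ (Fin (m+1)) :=
  ((Real.cosh t : ℂ) + (Real.sinh t : ℂ) * hprod z ξ)⁻¹ • (z - hprod z ξ • ξ) +
    (((Real.sinh t : ℂ) + (Real.cosh t : ℂ) * hprod z ξ) /
      ((Real.cosh t : ℂ) + (Real.sinh t : ℂ) * hprod z ξ)) • ξ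

/-! Writing `D(y) = cosh t + sinh t ⟨ξ, y⟩`, one has `Φ_{t,ξ} = D⁻¹ ψ` with `ψ` affine. On the
sphere `‖ψ(z)‖ = |D(z)|`, and `⟨ψ(z), Dψ(w)⟩ = ⟨z, w⟩ + sinh t ⟨ξ, w⟩ conj D(z)`; the second
term cancels exactly the contribution of the derivative of `D⁻¹`. Hence
`⟨Φ(z), DΦ(z) w⟩ = |D(z)|⁻² ⟨z, w⟩` as complex numbers, for every `w`, and the claim is its
imaginary part. -/

open scoped InnerProductSpace ComplexConjugate

theorem Complex.ofReal_cosh_add_ofReal_sinh_mul_ne_zero (t : ℝ) {a : ℂ} (ha : ‖a‖ ≤ 1) :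
    (Real.cosh t : ℂ) + Real.sinh t * a ≠ 0 := by
  intro h
  have hsinh : |Real.sinh t| < Real.cosh t :=
    abs_lt.2 ⟨neg_lt.1 (by simpa using Real.sinh_lt_cosh (-t)), Real.sinh_lt_cosh t⟩
  have hcosh : Real.cosh t ≤ |Real.sinh t| :=
    calc Real.cosh t = ‖(Real.sinh t : ℂ) * a‖ := by
          rw [eq_neg_of_add_eq_zero_right h, norm_neg, Complex.norm_real, Real.norm_of_nonneg
            (Real.cosh_pos t).le]
      _ ≤ |Real.sinh t| := by
          rw [norm_mul, Complex.norm_real, Real.norm_eq_abs]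
          exact mul_le_of_le_one_right (abs_nonneg _) ha
  linarith

theorem Complex.ofReal_cosh_sq (t : ℝ) : (Real.cosh t : ℂ) ^ 2 = (Real.sinh t : ℂ) ^ 2 + 1 := by
  exact_mod_cast Real.cosh_sq t

section
variable {E : Type*} [NormedAddCommGroup E] [InnerProductSpace ℂ E]

def phiDen (t : ℝ) (ξ y : E) : ℂ := Real.cosh t + Real.sinh t * ⟪ξ, y⟫_ℂ

def phiNum (t : ℝ) (ξ y : E) : E := y + ((Real.sinh t : ℂ) + (Real.cosh t - 1) * ⟪ξ, y⟫_ℂ) • ξ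

theorem phiDen_ne_zero (t : ℝ) {ξ y : E} (hξ : ‖ξ‖ ≤ 1) (hy : ‖y‖ ≤ 1) : phiDen t ξ y ≠ 0 :=
  Complex.ofReal_cosh_add_ofReal_sinh_mul_ne_zero t <|
    (norm_inner_le_norm ξ y).trans (mul_le_one₀ hξ (norm_nonneg y) hy)

theorem hasFDerivAt_phiDen (t : ℝ) (ξ y : E) :
    HasFDerivAt (phiDen t ξ) ((Real.sinh t : ℂ) • innerSL ℂ ξ) y :=
  ((innerSL ℂ ξ).hasFDerivAt.const_mul (Real.sinh t : ℂ)).const_add (Real.cosh t : ℂ)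

theorem hasFDerivAt_phiNum (t : ℝ) (ξ y : E) :
    HasFDerivAt (phiNum t ξ)
      (ContinuousLinearMap.id ℂ E + (((Real.cosh t : ℂ) - 1) • innerSL ℂ ξ).smulRight ξ) y :=
  (hasFDerivAt_id y).add <|
    ((((innerSL ℂ ξ).hasFDerivAt).const_mul ((Real.cosh t : ℂ) - 1)).const_add
      (Real.sinh t : ℂ)).smul_const ξ

theorem inner_phiNum_self (t : ℝ) {ξ y : E} (hξ : ‖ξ‖ = 1) (hy : ‖y‖ = 1) :
    ⟪phiNum t ξ y, phiNum t ξ y⟫_ℂ = conj (phiDen t ξ y) * phiDen t ξ y := by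
  have hξξ : ⟪ξ, ξ⟫_ℂ = 1 := by simp [hξ]
  have hyy : ⟪y, y⟫_ℂ = 1 := by simp [hy]
  have hyξ : ⟪y, ξ⟫_ℂ = conj ⟪ξ, y⟫_ℂ := (inner_conj_symm y ξ).symm
  simp only [phiNum, phiDen, inner_add_left, inner_add_right, inner_smul_left, inner_smul_right,
    hξξ, hyy, hyξ, map_add, map_mul, map_sub, map_one, Complex.conj_ofReal]
  linear_combination (conj ⟪ξ, y⟫_ℂ * ⟪ξ, y⟫_ℂ - 1) * Complex.ofReal_cosh_sq t

theorem inner_phiNum_add_smul (t : ℝ) {ξ : E} (hξ : ‖ξ‖ = 1) (y w : E) :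
    ⟪phiNum t ξ y, w + (((Real.cosh t : ℂ) - 1) * ⟪ξ, w⟫_ℂ) • ξ⟫_ℂ
      = ⟪y, w⟫_ℂ + conj (phiDen t ξ y) * (Real.sinh t * ⟪ξ, w⟫_ℂ) := by
  have hξξ : ⟪ξ, ξ⟫_ℂ = 1 := by simp [hξ]
  have hyξ : ⟪y, ξ⟫_ℂ = conj ⟪ξ, y⟫_ℂ := (inner_conj_symm y ξ).symm
  simp only [phiNum, phiDen, inner_add_left, inner_add_right, inner_smul_left, inner_smul_right,
    hξξ, hyξ, map_add, map_mul, map_sub, map_one, Complex.conj_ofReal]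
  linear_combination (⟪ξ, w⟫_ℂ * conj ⟪ξ, y⟫_ℂ) * Complex.ofReal_cosh_sq t

end

theorem PhiC_eq_inv_smul {m : ℕ} (t : ℝ) (ξ : EuclideanSpace ℂ (Fin (m+1))) :
    PhiC t ξ = fun y => (phiDen t ξ y)⁻¹ • phiNum t ξ y := by
  funext y
  simp only [PhiC, phiDen, phiNum, hprod, div_eq_mul_inv]
  module

theorem fderiv_PhiC_apply {m : ℕ} (t : ℝ) {ξ z : EuclideanSpace ℂ (Fin (m+1))}
    (hz : phiDen t ξ z ≠ 0) (w : EuclideanSpace ℂ (Fin (m+1))) :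
    fderiv ℝ (PhiC t ξ) z w =
      (phiDen t ξ z)⁻¹ • (w + (((Real.cosh t : ℂ) - 1) * ⟪ξ, w⟫_ℂ) • ξ) -
        ((phiDen t ξ z ^ 2)⁻¹ * (Real.sinh t * ⟪ξ, w⟫_ℂ)) • phiNum t ξ z := by
  have h : HasFDerivAt (fun y => (phiDen t ξ y)⁻¹ • phiNum t ξ y) _ z :=
    ((hasFDerivAt_inv hz).comp z (hasFDerivAt_phiDen t ξ z)).fun_smul (hasFDerivAt_phiNum t ξ z)
  rw [PhiC_eq_inv_smul, (h.restrictScalars ℝ).fderiv]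
  simp only [ContinuousLinearMap.coe_restrictScalars', add_apply, smul_apply,
    ContinuousLinearMap.id_apply, ContinuousLinearMap.smulRight_apply, ContinuousLinearMap.comp_apply,
    ContinuousLinearMap.toSpanSingleton_apply, coe_innerSL_apply, Function.comp_apply, smul_eq_mul]
  module

theorem inner_PhiC_fderiv_PhiC {m : ℕ} (t : ℝ) {ξ z : EuclideanSpace ℂ (Fin (m+1))}
    (hξ : ‖ξ‖ = 1) (hz : ‖z‖ = 1) (w : EuclideanSpace ℂ (Fin (m+1))) :
    ⟪PhiC t ξ z, fderiv ℝ (PhiC t ξ) z w⟫_ℂ = (‖phiDen t ξ z‖ ^ 2 : ℂ)⁻¹ * ⟪z, w⟫_ℂ := by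
  have hD := phiDen_ne_zero t hξ.le hz.le
  rw [fderiv_PhiC_apply t hD, PhiC_eq_inv_smul, ← Complex.conj_mul']
  simp only [inner_sub_right, inner_smul_left, inner_smul_right, inner_phiNum_add_smul t hξ,
    inner_phiNum_self t hξ hz, map_inv₀]
  field_simp
  ring

theorem stmt11_general (m : ℕ) (t : ℝ) (ξ z w : EuclideanSpace ℂ (Fin (m+1)))
    (hξ : ‖ξ‖ = 1) (hz : ‖z‖ = 1) :
    (inner ℂ (PhiC t ξ z) (fderiv ℝ (PhiC t ξ) z w) : ℂ).im
      = (‖(Real.cosh t : ℂ) + (Real.sinh t : ℂ) * hprod z ξ‖)⁻¹ ^ 2 *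
        (inner ℂ z w : ℂ).im := by
  rw [inner_PhiC_fderiv_PhiC t hξ hz, inv_pow, ← Complex.ofReal_pow, ← Complex.ofReal_inv,
    Complex.im_ofReal_mul]
  rfl

/-- for `m ≥ 1`, `t ∈ ℝ`, `ξ, z ∈ 𝕊^{2m+1}` and `w ∈ ℂ^{m+1}` tangent to the
sphere at `z` (i.e. `Re(Σ_j w_j conj(z_j)) = 0`), the derivative `W = DΦ_{t,ξ}(z)[w]` satisfies
`Im(Σ_j conj(Φ_{t,ξ}(z)_j) W_j) = |cosh t + sinh t (z·ξ̄)|⁻² Im(Σ_j conj(z_j) w_j)`: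
`Φ_{t,ξ}` pulls back `θ_c` to `|cosh t + sinh t (z·ξ̄)|⁻² θ_c`. -/
theorem stmt11 (m : ℕ) (hm : 1 ≤ m) (t : ℝ) (ξ z w : EuclideanSpace ℂ (Fin (m+1)))
    (hξ : ‖ξ‖ = 1) (hz : ‖z‖ = 1)
    (hw : (inner ℂ z w : ℂ).re = 0) :
    (inner ℂ (PhiC t ξ z) (fderiv ℝ (PhiC t ξ) z w) : ℂ).im
      = (‖(Real.cosh t : ℂ) + (Real.sinh t : ℂ) * hprod z ξ‖)⁻¹ ^ 2 *
        (inner ℂ z w : ℂ).im :=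
  stmt11_general m t ξ z w hξ hz
end
end

section
/- Let m ≥ 1, t ∈ ℝ, ξ ∈ 𝕊^{2m+1}, and let φ(z) = |cosh t + sinh t (z·ξ̄)|² on 𝕊^{2m+1}. Then for every z ∈ 𝕊^{2m+1}: φ(z)^{−1} |∂φ|²(z) = (1/2) sinh²t (1 − |z·ξ̄|²), where |∂φ|²(z) = (1/8)|P_{H_z}(∇φ̃(z))|² is the squared norm of ∂_bφ with respect to the canonical pseudohermitian structure θ_c. -/
noncomputable section

/-!
Write `φ = ‖A‖²` with `A(z) = cosh t + sinh t ⟪ξ, z⟫`, which is complex-affine in `z`;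
its real gradient is `2 sinh t · A · ξ`. The gradient of the degree-zero extension `φ̃` at a unit
vector `z` differs from it by a real multiple of `z` (the radial part), and the projection onto
`H_z` kills every complex multiple of `z`. Hence `|∂φ|² = ½ sinh² t ‖A‖² ‖P_{H_z} ξ‖²` with
`‖P_{H_z} ξ‖² = 1 - |z·ξ̄|²`, and `A ≠ 0` because `|sinh t| < cosh t`.
-/

open InnerProductSpace RealInnerProductSpace

section Retraction

variable {F : Type*} [NormedAddCommGroup F] [InnerProductSpace ℝ F]

theorem hasFDerivAt_norm_inv_smul_self {z : F} (hz : ‖z‖ = 1) :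
    HasFDerivAt (fun y : F => ‖y‖⁻¹ • y)
      (ContinuousLinearMap.id ℝ F - (innerSL ℝ z).smulRight z) z := by
  have hsqrt := (hasStrictFDerivAt_norm_sq z).hasFDerivAt.sqrt (by simp [hz])
  have hinv := (hasDerivAt_inv (by simp [hz] : √(‖z‖ ^ 2) ≠ 0)).comp_hasFDerivAt z hsqrt
  simp only [Function.comp_def, Real.sqrt_sq (norm_nonneg _)] at hinv
  refine (hinv.smul (hasFDerivAt_id z)).congr_fderiv ?_
  ext u
  simp [hz]
  module

theorem HasGradientAt.comp_norm_inv_smul [CompleteSpace F] {f : F → ℝ} {g z : F}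
    (hf : HasGradientAt f g z) (hz : ‖z‖ = 1) :
    HasGradientAt (fun y => f (‖y‖⁻¹ • y)) (g - ⟪z, g⟫ • z) z := by
  rw [hasGradientAt_iff_hasFDerivAt] at hf ⊢
  have hf' : HasFDerivAt f (toDual ℝ F g) (‖z‖⁻¹ • z) := by simpa [hz] using hf
  refine (hf'.comp (g := f) (f := fun y : F => ‖y‖⁻¹ • y) z
    (hasFDerivAt_norm_inv_smul_self hz)).congr_fderiv ?_
  ext u
  simp [real_inner_comm, mul_comm]

end Retraction

namespace EuclideanSpace

variable {ι : Type*} [Fintype ι]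

theorem real_inner_eq_re_inner (x y : EuclideanSpace ℂ ι) : ⟪x, y⟫ = (inner ℂ x y).re := by
  simp [PiLp.inner_apply, RCLike.inner_apply, Complex.re_sum]

theorem hasGradientAt_norm_const_add_mul_inner_sq (a b : ℂ) (ξ u : EuclideanSpace ℂ ι) :
    HasGradientAt (fun v => ‖a + b * inner ℂ ξ v‖ ^ 2)
      ((2 * (starRingEnd ℂ b * (a + b * inner ℂ ξ u))) • ξ) u := by
  let L : EuclideanSpace ℂ ι →L[ℝ] ℂ := b • (innerSL ℂ ξ).restrictScalars ℝ
  have hL : HasFDerivAt (fun v => a + b * inner ℂ ξ v) L u := L.hasFDerivAt.const_add a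
  refine hasGradientAt_iff_hasFDerivAt.mpr (hL.norm_sq.congr_fderiv ?_)
  ext v
  simp [L, real_inner_eq_re_inner, Complex.inner]
  ring

end EuclideanSpace

section Horizontal

variable {m : ℕ} {z : EuclideanSpace ℂ (Fin (m+1))}

theorem projH_smul (z w : EuclideanSpace ℂ (Fin (m+1))) (c : ℂ) :
    projH z (c • w) = c • projH z w := by
  simp only [projH, inner_smul_right, smul_sub, smul_smul]

theorem projH_sub_smul_self (hz : ‖z‖ = 1) (w : EuclideanSpace ℂ (Fin (m+1))) (c : ℂ) :
    projH z (w - c • z) = projH z w := by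
  simp [projH, inner_self_eq_norm_sq_to_K, hz, sub_smul]

theorem norm_projH_sq (hz : ‖z‖ = 1) (w : EuclideanSpace ℂ (Fin (m+1))) :
    ‖projH z w‖ ^ 2 = ‖w‖ ^ 2 - ‖inner ℂ z w‖ ^ 2 := by
  have horth : inner ℂ (projH z w) (inner ℂ z w • z) = 0 := by simp [projH, hz]
  have hw := norm_add_sq_eq_norm_sq_add_norm_sq_of_inner_eq_zero _ _ horth
  rw [projH, sub_add_cancel, norm_smul, hz, mul_one] at hw
  rw [projH]
  linear_combination -hw

theorem delbSq_eq_of_hasGradientAt {F : EuclideanSpace ℂ (Fin (m+1)) → ℝ}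
    {g : EuclideanSpace ℂ (Fin (m+1))} (hF : HasGradientAt F g z) (hz : ‖z‖ = 1) :
    delbSq F z = 1 / 8 * ‖projH z g‖ ^ 2 := by
  have hext : HasGradientAt (sphExtC F) (g - ⟪z, g⟫ • z) z := hF.comp_norm_inv_smul hz
  rw [delbSq, hext.gradient, ← Complex.coe_smul, projH_sub_smul_self hz]

end Horizontal

theorem Real.cosh_add_sinh_mul_ne_zero (t : ℝ) {w : ℂ} (hw : ‖w‖ ≤ 1) :
    (Real.cosh t : ℂ) + Real.sinh t * w ≠ 0 := by
  intro h
  have hnorm : Real.cosh t = |Real.sinh t| * ‖w‖ := by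
    have := congrArg (‖·‖) (eq_neg_of_add_eq_zero_left h)
    simpa only [norm_neg, norm_mul, Complex.norm_real, Real.norm_eq_abs,
      abs_of_pos (Real.cosh_pos t)] using this
  have habs : |Real.sinh t| < Real.cosh t :=
    abs_lt.2 ⟨neg_lt.1 (by simpa using Real.sinh_lt_cosh (-t)), Real.sinh_lt_cosh t⟩
  nlinarith [abs_nonneg (Real.sinh t)]

theorem stmt13_general (m : ℕ) (t : ℝ)
    (ξ : EuclideanSpace ℂ (Fin (m+1))) (hξ : ‖ξ‖ = 1)
    (φ : EuclideanSpace ℂ (Fin (m+1)) → ℝ)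
    (hφ : ∀ z, φ z = ‖(Real.cosh t : ℂ) + (Real.sinh t : ℂ) * hprod z ξ‖ ^ 2) :
    ∀ z : EuclideanSpace ℂ (Fin (m+1)), ‖z‖ = 1 →
      (φ z)⁻¹ * delbSq φ z
        = (1 / 2) * Real.sinh t ^ 2 * (1 - ‖hprod z ξ‖ ^ 2) := by
  intro z hz
  set A : ℂ := Real.cosh t + Real.sinh t * hprod z ξ
  have hgrad : HasGradientAt φ ((2 * (Real.sinh t * A)) • ξ) z := by
    rw [funext hφ]
    have :=
      EuclideanSpace.hasGradientAt_norm_const_add_mul_inner_sq (Real.cosh t) (Real.sinh t) ξ z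
    rwa [Complex.conj_ofReal] at this
  have hA : A ≠ 0 := Real.cosh_add_sinh_mul_ne_zero t <| by
    simpa [hprod, hξ, hz] using norm_inner_le_norm (𝕜 := ℂ) ξ z
  have hφz : φ z = ‖A‖ ^ 2 := hφ z
  rw [delbSq_eq_of_hasGradientAt hgrad hz, projH_smul, norm_smul, mul_pow, norm_projH_sq hz,
    hξ, norm_inner_symm, hφz, norm_mul, norm_mul, Complex.norm_real, Real.norm_eq_abs]
  field_simp
  simp only [hprod, sq_abs, Complex.norm_ofNat]
  ring

/-- for `m ≥ 1`, `t ∈ ℝ`, `ξ ∈ 𝕊^{2m+1}` and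
`φ(z) = |cosh t + sinh t (z·ξ̄)|²`, one has, at every `z ∈ 𝕊^{2m+1}`,
`φ(z)⁻¹ |∂φ|²(z) = (1/2) sinh²t (1 − |z·ξ̄|²)`. -/
theorem stmt13 (m : ℕ) (hm : 1 ≤ m) (t : ℝ)
    (ξ : EuclideanSpace ℂ (Fin (m+1))) (hξ : ‖ξ‖ = 1)
    (φ : EuclideanSpace ℂ (Fin (m+1)) → ℝ)
    (hφ : ∀ z, φ z = ‖(Real.cosh t : ℂ) + (Real.sinh t : ℂ) * hprod z ξ‖ ^ 2) :
    ∀ z : EuclideanSpace ℂ (Fin (m+1)), ‖z‖ = 1 →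
      (φ z)⁻¹ * delbSq φ z
        = (1 / 2) * Real.sinh t ^ 2 * (1 - ‖hprod z ξ‖ ^ 2) :=
  stmt13_general m t ξ hξ φ hφ
end
end
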